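/- Let μ be a σ-finite measure on X and let m, n ∈ ℕ. For every measurable set B ⊆ X^{n+m}, the measure μ^[n+m] satisfies the recursion μ^[n+m](B) = ∫∫ 1_B(x₁,…,x_{n+m}) (μ+δ_{x₁}+⋯+δ_{x_m})^[n](d(x_{m+1},…,x_{m+n})) μ^[m](d(x₁,…,x_m)). -/

import Mathlib

open MeasureTheory ProbabilityTheory Filter
open scoped ENNReal Classical

noncomputable section

variable {X : Type*} [MeasurableSpace X]

/-- The measure `μ^[n]` on `X^n`, defined recursively by adding Dirac masses. -/
def seqM (μ : Measure X) : (n : ℕ) → Measure (Fin n → X)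
  | 0 => Measure.dirac (fun i => i.elim0)
  | n + 1 => (seqM μ n).bind
      (fun x => (μ + ∑ i, Measure.dirac (x i)).map (Fin.snoc x))

/-- The rising factorial `w^{(n)} = w (w+1) ⋯ (w+n-1)`. -/
def risingFac (w : ℝ) (n : ℕ) : ℝ := ∏ i ∈ Finset.range n, (w + i)

/-- The Dirichlet distribution, realized as the law of normalized independent
Gamma random variables (with the convention `Gamma(0) = δ₀`). -/
def dirichletLaw {k : ℕ} (α : Fin k → ℝ) : Measure (Fin k → ℝ) :=
  (Measure.pi (fun i => if 0 < α i then gammaMeasure (α i) 1 else Measure.dirac 0)).map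
    (fun y i => y i / ∑ j, y j)

/-- `Q` is the law of a Dirichlet–Ferguson process with parameter measure `ρ`. -/
def IsDFLaw (ρ : Measure X) (Q : Measure (Measure X)) : Prop :=
  IsProbabilityMeasure Q ∧ (∀ᵐ μ ∂Q, IsProbabilityMeasure μ) ∧
    ∀ (k : ℕ) (B : Fin k → Set X), (∀ i, MeasurableSet (B i)) →
      Pairwise (Function.onFun Disjoint B) → (⋃ i, B i) = Set.univ →
      Q.map (fun μ i => (μ (B i)).toReal) = dirichletLaw (fun i => (ρ (B i)).toReal)

/-- `ζ` is a Dirichlet–Ferguson process with parameter measure `ρ` on `(Ω, P)`. -/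
def IsDF {Ω : Type*} [MeasurableSpace Ω] (ρ : Measure X) (P : Measure Ω)
    (ζ : Ω → Measure X) : Prop :=
  Measurable ζ ∧ IsDFLaw ρ (P.map ζ)

/-- The Campbell measure of the random measure `ζ`. -/
def campbell {Ω : Type*} [MeasurableSpace Ω] (P : Measure Ω) (ζ : Ω → Measure X) :
    Measure (Ω × X) :=
  P.bind (fun ω => (ζ ω).map (fun x => (ω, x)))

/-- The space `H_n` of symmetric, conditionally centered functions in `L²(ρ^[n])`. -/
def memH (ρ : Measure X) : (n : ℕ) → ((Fin n → X) → ℝ) → Prop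
  | 0, g => MemLp g 2 (seqM ρ 0)
  | n + 1, g => MemLp g 2 (seqM ρ (n + 1)) ∧
      (∀ π : Equiv.Perm (Fin (n + 1)),
        (fun x => g (x ∘ π)) =ᵐ[seqM ρ (n + 1)] g) ∧
      ∀ᵐ x ∂ seqM ρ n,
        ∫ t, g (Fin.snoc x t) ∂(ρ + ∑ i, Measure.dirac (x i)) = 0

/-- The multiple integral `ζⁿ(f)(ω) = ∫ f d(ζ ω)ⁿ`. -/
def chaosI {Ω : Type*} [MeasurableSpace Ω] (ζ : Ω → Measure X) (n : ℕ)
    (f : (Fin n → X) → ℝ) (ω : Ω) : ℝ :=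
  ∫ z, f z ∂ Measure.pi (fun _ : Fin n => ζ ω)

/-- The total mass `θ = ρ(X)` as a real number. -/
def θr (ρ : Measure X) : ℝ := (ρ Set.univ).toReal

/-- `(θ+n-1) n n!/θ^{(2n)}` at chaos level `n+1`. -/
def gradDomCoeff (ρ : Measure X) (n : ℕ) : ℝ :=
  (θr ρ + n) * ((n : ℝ) + 1) * (Nat.factorial (n + 1) : ℝ) /
    risingFac (θr ρ) (2 * (n + 1))

/-- `F ∈ dom(∇)`, expressed in terms of its chaos kernels `f`. -/
def InDomGrad (ρ : Measure X) (f : (n : ℕ) → (Fin (n + 1) → X) → ℝ) : Prop :=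
  Summable fun n => gradDomCoeff ρ n * ∫ z, (f n z) ^ 2 ∂ seqM ρ (n + 1)

/-- Partial sums of the Malliavin gradient series. -/
def gradPartial {Ω : Type*} [MeasurableSpace Ω] (ζ : Ω → Measure X)
    (f : (n : ℕ) → (Fin (n + 1) → X) → ℝ) (N : ℕ) (p : Ω × X) : ℝ :=
  ∑ n ∈ Finset.range N, ((n : ℝ) + 1) *
    ((∫ y, f n (Fin.cons p.2 y) ∂ Measure.pi (fun _ : Fin n => ζ p.1)) -
      chaosI ζ (n + 1) (f n) p.1)

/-- `G` is the Malliavin gradient of the functional with chaos kernels `f`: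
the gradient series converges to `G` in `L²(C_ζ)`. -/
def HasGradient {Ω : Type*} [MeasurableSpace Ω] (P : Measure Ω) (ζ : Ω → Measure X)
    (f : (n : ℕ) → (Fin (n + 1) → X) → ℝ) (G : Ω × X → ℝ) : Prop :=
  Tendsto (fun N => eLpNorm (fun p => G p - gradPartial ζ f N p) 2 (campbell P ζ))
    atTop (nhds 0)

/-- `F = c₀ + ∑_{n≥1} ζⁿ(fₙ)` with convergence in `L²(P)`. -/
def IsChaosExp {Ω : Type*} [MeasurableSpace Ω] (P : Measure Ω) (ζ : Ω → Measure X)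
    (c₀ : ℝ) (f : (n : ℕ) → (Fin (n + 1) → X) → ℝ) (F : Ω → ℝ) : Prop :=
  Tendsto (fun N => eLpNorm
    (fun ω => F ω - c₀ - ∑ n ∈ Finset.range N, chaosI ζ (n + 1) (f n) ω) 2 P)
    atTop (nhds 0)

/-- `F ∈ dom(L)`, expressed in terms of its chaos kernels `f`. -/
def InDomL (ρ : Measure X) (f : (n : ℕ) → (Fin (n + 1) → X) → ℝ) : Prop :=
  Summable fun n : ℕ => ((θr ρ + (n : ℝ)) ^ 2 * ((n : ℝ) + 1) ^ 2 * (Nat.factorial (n + 1) : ℝ) /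
      risingFac (θr ρ) (2 * (n + 1))) * ∫ z, (f n z) ^ 2 ∂ seqM ρ (n + 1)

end

/-! Induction on `n`, for all measurable integrands at once. Integrating along the recursion,
the kernel that appends the last coordinate to `w = (x, y)` in `μ^[m+n+1]` is
`μ + ∑ δ_{xᵢ} + ∑ δ_{yⱼ}`, which is exactly the kernel that appends it to `y` in
`(μ + ∑ δ_{xᵢ})^[n+1]`. -/

section

variable {X : Type*} [MeasurableSpace X]

theorem measurable_fin_snoc {n : ℕ} :
    Measurable fun p : (Fin n → X) × X => (Fin.snoc p.1 p.2 : Fin (n + 1) → X) := by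
  refine measurable_pi_iff.mpr fun i => ?_
  induction i using Fin.lastCases with
  | last => simpa using measurable_snd
  | cast i => simpa [Function.comp_def] using (measurable_pi_apply i).comp measurable_fst

theorem measurable_fin_snoc_right {k : ℕ} (w : Fin k → X) :
    Measurable (Fin.snoc (α := fun _ => X) w) :=
  measurable_fin_snoc.comp measurable_prodMk_left

theorem measurable_fin_append_right {m n : ℕ} (x : Fin m → X) :
    Measurable (Fin.append x : (Fin n → X) → Fin (m + n) → X) := by
  refine measurable_pi_iff.mpr fun i => ?_
  induction i using Fin.addCases with
  | left i => simp
  | right i => simpa using measurable_pi_apply i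

theorem lintegral_add_sum_dirac (ν : Measure X) {k : ℕ} (x : Fin k → X) {g : X → ℝ≥0∞}
    (hg : Measurable g) :
    ∫⁻ t, g t ∂(ν + ∑ i, Measure.dirac (x i)) = ∫⁻ t, g t ∂ν + ∑ i, g (x i) := by
  simp only [lintegral_add_measure, lintegral_finsetSum_measure, lintegral_dirac' _ hg]

theorem measurable_lintegral_add_sum_dirac (ν : Measure X) [SFinite ν] {k : ℕ}
    {f : (Fin k → X) × X → ℝ≥0∞} (hf : Measurable f) :
    Measurable fun w : Fin k → X => ∫⁻ t, f (w, t) ∂(ν + ∑ i, Measure.dirac (w i)) := by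
  simp only [fun w => lintegral_add_sum_dirac ν w (g := fun t => f (w, t))
    (hf.comp measurable_prodMk_left)]
  exact hf.lintegral_prod_right'.add <| Finset.measurable_sum _ fun i _ =>
    hf.comp (measurable_id.prodMk (measurable_pi_apply i))

theorem measurable_map_snoc_add_sum_dirac (ν : Measure X) [SFinite ν] {k : ℕ} :
    Measurable fun w : Fin k → X =>
      (ν + ∑ i, Measure.dirac (w i)).map (Fin.snoc (α := fun _ => X) w) := by
  refine Measure.measurable_of_measurable_coe _ fun s hs => ?_
  simp only [Measure.map_apply (measurable_fin_snoc_right _) hs,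
    ← lintegral_indicator_one (measurable_fin_snoc_right _ hs)]
  exact measurable_lintegral_add_sum_dirac ν
    ((measurable_one.indicator hs).comp measurable_fin_snoc)

theorem add_sum_dirac_fin_append (ν : Measure X) {m n : ℕ} (x : Fin m → X) (y : Fin n → X) :
    ν + ∑ i, Measure.dirac (Fin.append x y i)
      = (ν + ∑ i, Measure.dirac (x i)) + ∑ i, Measure.dirac (y i) := by
  simp only [Fin.sum_univ_add, Fin.append_left, Fin.append_right, add_assoc]

namespace seqM

theorem lintegral_zero (ν : Measure X) {g : (Fin 0 → X) → ℝ≥0∞} (hg : Measurable g) :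
    ∫⁻ w, g w ∂seqM ν 0 = g Fin.elim0 := by
  rw [seqM, lintegral_dirac' _ hg]

theorem lintegral_succ (ν : Measure X) [SFinite ν] (k : ℕ) {g : (Fin (k + 1) → X) → ℝ≥0∞}
    (hg : Measurable g) :
    ∫⁻ w, g w ∂seqM ν (k + 1)
      = ∫⁻ z, ∫⁻ t, g (Fin.snoc z t) ∂(ν + ∑ i, Measure.dirac (z i)) ∂seqM ν k := by
  rw [seqM, Measure.lintegral_bind (measurable_map_snoc_add_sum_dirac ν).aemeasurable
    hg.aemeasurable]
  refine lintegral_congr fun z => ?_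
  rw [lintegral_map hg (measurable_fin_snoc_right z)]

theorem lintegral_add (μ : Measure X) [SFinite μ] (m : ℕ) :
    ∀ (n : ℕ) {f : (Fin (m + n) → X) → ℝ≥0∞}, Measurable f →
      ∫⁻ w, f w ∂seqM μ (m + n)
        = ∫⁻ x, ∫⁻ y, f (Fin.append x y) ∂seqM (μ + ∑ i, Measure.dirac (x i)) n ∂seqM μ m
  | 0, f, hf => by
    refine lintegral_congr fun x => ?_
    rw [lintegral_zero _ (g := fun y => f (Fin.append x y))
      (hf.comp (measurable_fin_append_right x))]
    simp only [Fin.append_elim0]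
    rfl
  | n + 1, f, hf => by
    have hf_snoc := hf.comp (measurable_fin_snoc (n := m + n))
    calc ∫⁻ w, f w ∂seqM μ (m + (n + 1))
        = ∫⁻ z, ∫⁻ t, f (Fin.snoc z t) ∂(μ + ∑ i, Measure.dirac (z i)) ∂seqM μ (m + n) :=
          lintegral_succ μ (m + n) hf
      _ = ∫⁻ x, ∫⁻ y, ∫⁻ t, f (Fin.snoc (Fin.append x y) t)
            ∂(μ + ∑ i, Measure.dirac (Fin.append x y i))
            ∂seqM (μ + ∑ i, Measure.dirac (x i)) n ∂seqM μ m :=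
          lintegral_add μ m n (measurable_lintegral_add_sum_dirac μ hf_snoc)
      _ = ∫⁻ x, ∫⁻ y, f (Fin.append x y)
            ∂seqM (μ + ∑ i, Measure.dirac (x i)) (n + 1) ∂seqM μ m := by
          refine lintegral_congr fun x => ?_
          rw [lintegral_succ _ n (g := fun y => f (Fin.append x y))
            (hf.comp (measurable_fin_append_right x))]
          simp only [add_sum_dirac_fin_append, Fin.append_snoc]

end seqM

end

theorem statement2 {X : Type*} [MeasurableSpace X] (μ : MeasureTheory.Measure X)
    [MeasureTheory.SigmaFinite μ] (m n : ℕ) (B : Set (Fin (m + n) → X))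
    (hB : MeasurableSet B) :
    seqM μ (m + n) B
      = ∫⁻ x, seqM (μ + ∑ i, MeasureTheory.Measure.dirac (x i)) n
          {y | Fin.append x y ∈ B} ∂ seqM μ m := by
  rw [← lintegral_indicator_one hB, seqM.lintegral_add μ m n (measurable_one.indicator hB)]
  refine lintegral_congr fun x => ?_
  exact lintegral_indicator_one (measurable_fin_append_right x hB)
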